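/- Let λ, μ, A, B be real numbers and ξ¹, ξ² ∈ ℝ³, set ξ^P = ξ¹ + ξ², and let H(p¹, p²) be the S–S interaction symbol scalar. Suppose p¹ ∈ ℝ³ lies in the plane spanned by ξ¹ and ξ² (with p¹·ξ¹ = 0), and p² ∈ ℝ³ satisfies p²·ξ¹ = 0 and p²·ξ² = 0 (i.e., p² is perpendicular to the interaction plane). Then H(p¹, p²) = 0 and H(p², p¹) = 0. (The interaction of an in-plane polarized S wave with an S wave polarized perpendicular to the interaction plane produces no P wave: the mixed SH–SV symbol vanishes.) -/

import Mathlib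

/-!
The polarization `p2` is orthogonal to `ξ1` and `ξ2`, hence to `ξ1 + ξ2` and, by linearity, to
every vector of the interaction plane, in particular to `p1`. Every monomial of the S–S symbol
contains a dot product of `p2` with one of `ξ1`, `ξ2`, `ξ1 + ξ2` or `p1`, so the symbol vanishes
in either order of the two waves.
-/

/-- Euclidean dot product on ℝ³. -/
def dot (x y : Fin 3 → ℝ) : ℝ := ∑ i, x i * y i

/-- The S–S interaction symbol scalar H(p¹, p²) for two S waves with covectors
ξ¹, ξ² and polarizations p¹, p². -/
noncomputable def HSS (lam mu A B : ℝ) (ξ1 ξ2 p1 p2 : Fin 3 → ℝ) : ℝ :=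
  lam * dot p1 p2 * dot ξ1 ξ2 * dot (ξ1 + ξ2) (ξ1 + ξ2)
    + mu * (dot p1 (ξ1 + ξ2) * dot ξ1 ξ2 + dot ξ1 (ξ1 + ξ2) * dot p1 ξ2)
        * dot p2 (ξ1 + ξ2)
    + mu * dot p1 p2 * dot ξ1 (ξ1 + ξ2) * dot ξ2 (ξ1 + ξ2)
    + mu * (dot p2 (ξ1 + ξ2) * dot ξ2 ξ1 + dot ξ2 (ξ1 + ξ2) * dot p2 ξ1)
        * dot p1 (ξ1 + ξ2)
    + mu * dot p1 p2 * dot ξ2 (ξ1 + ξ2) * dot ξ1 (ξ1 + ξ2)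
    + (A / 2) * (dot p1 (ξ1 + ξ2) * dot p2 (ξ1 + ξ2) * dot ξ1 ξ2
      + dot p1 (ξ1 + ξ2) * dot ξ2 (ξ1 + ξ2) * dot ξ1 p2
      + dot ξ1 (ξ1 + ξ2) * dot p2 (ξ1 + ξ2) * dot p1 ξ2
      + dot ξ1 (ξ1 + ξ2) * dot ξ2 (ξ1 + ξ2) * dot p1 p2)
    + B * (dot p1 p2 * dot ξ1 ξ2 + dot p1 ξ2 * dot ξ1 p2)
        * dot (ξ1 + ξ2) (ξ1 + ξ2)

lemma dot_comm (x y : Fin 3 → ℝ) : dot x y = dot y x := dotProduct_comm x y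

lemma dot_add_right (x y z : Fin 3 → ℝ) : dot x (y + z) = dot x y + dot x z :=
  dotProduct_add x y z

lemma dot_eq_zero_of_mem_span {q p : Fin 3 → ℝ} {s : Set (Fin 3 → ℝ)}
    (hs : ∀ v ∈ s, dot q v = 0) (hp : p ∈ Submodule.span ℝ s) : dot q p = 0 :=
  (Submodule.span_le (p := LinearMap.ker (dotProductBilin ℝ ℝ q))).mpr hs hp

section Orthogonal

variable {lam mu A B : ℝ} {ξ1 ξ2 p q : Fin 3 → ℝ}

lemma dot_add_eq_zero_of_orthogonal (h1 : dot q ξ1 = 0) (h2 : dot q ξ2 = 0) :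
    dot q (ξ1 + ξ2) = 0 := by
  rw [dot_add_right, h1, h2, add_zero]

lemma HSS_eq_zero_of_orthogonal_right (h1 : dot q ξ1 = 0) (h2 : dot q ξ2 = 0)
    (hp : dot q p = 0) : HSS lam mu A B ξ1 ξ2 p q = 0 := by
  simp only [HSS, dot_comm p q, dot_comm ξ1 q, dot_add_eq_zero_of_orthogonal h1 h2, h1, hp]
  ring

lemma HSS_eq_zero_of_orthogonal_left (h1 : dot q ξ1 = 0) (h2 : dot q ξ2 = 0)
    (hp : dot q p = 0) : HSS lam mu A B ξ1 ξ2 q p = 0 := by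
  simp only [HSS, dot_add_eq_zero_of_orthogonal h1 h2, h2, hp]
  ring

end Orthogonal

theorem ss_interaction_HV_vanishes_general (lam mu A B : ℝ) (ξ1 ξ2 p1 p2 : Fin 3 → ℝ)
    (hp1span : p1 ∈ Submodule.span ℝ ({ξ1, ξ2} : Set (Fin 3 → ℝ)))
    (hp21 : dot p2 ξ1 = 0) (hp22 : dot p2 ξ2 = 0) :
    HSS lam mu A B ξ1 ξ2 p1 p2 = 0 ∧ HSS lam mu A B ξ1 ξ2 p2 p1 = 0 := by
  have hp2p1 : dot p2 p1 = 0 := by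
    refine dot_eq_zero_of_mem_span ?_ hp1span
    rintro v (rfl | rfl)
    exacts [hp21, hp22]
  exact ⟨HSS_eq_zero_of_orthogonal_right hp21 hp22 hp2p1,
    HSS_eq_zero_of_orthogonal_left hp21 hp22 hp2p1⟩

/-- The interaction of an in-plane polarized S wave with an S wave polarized
perpendicular to the interaction plane produces no P wave: the mixed SH–SV
symbol vanishes. -/
theorem ss_interaction_HV_vanishes (lam mu A B : ℝ) (ξ1 ξ2 p1 p2 : Fin 3 → ℝ)
    (hp1span : p1 ∈ Submodule.span ℝ ({ξ1, ξ2} : Set (Fin 3 → ℝ)))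
    (hp11 : dot p1 ξ1 = 0)
    (hp21 : dot p2 ξ1 = 0) (hp22 : dot p2 ξ2 = 0) :
    HSS lam mu A B ξ1 ξ2 p1 p2 = 0 ∧ HSS lam mu A B ξ1 ξ2 p2 p1 = 0 :=
  ss_interaction_HV_vanishes_general lam mu A B ξ1 ξ2 p1 p2 hp1span hp21 hp22
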